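/- arXiv:2403.11555 — 5 statements merged into one kernel-verified Lean document; each statement's English description precedes it below -/
import Mathlib

section
/- Let k ≥ 4 and let G be an odd k⁺-critical graph. Then every vertex v of G has either even degree or degree d(v) ≥ ⌊k/2⌋. -/
/-!
Let `v` have odd degree `d` with `d < ⌊k/2⌋`, so `2d < k - 1`. By criticality `G - v` has an odd
colouring with `k - 1` colours. For each neighbour `w` of `v` fix one colour occurring an odd number
of times around `w` in `G - v`; together with the colours of the neighbours themselves these forbid
at most `2d` colours, so some colour is left for `v`. Giving it to `v` keeps the colouring proper
and keeps each of those odd colours odd, while a neighbour whose only neighbour is `v` sees the new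
colour once; `v` itself sees some colour an odd number of times since `d` is odd. This odd
`(k - 1)`-colouring of `G` contradicts `k ≤ χₒ(G)`.
-/

open SimpleGraph

/-- The degree of a vertex, as the cardinality of its neighbor set. -/
noncomputable def deg {V : Type} (G : SimpleGraph V) (v : V) : ℕ := (G.neighborSet v).ncard

/-- `H` is a minor of `G`, via branch sets. -/
def IsMinor {W V : Type} (H : SimpleGraph W) (G : SimpleGraph V) : Prop :=
  ∃ B : W → Set V,
    (∀ w, (B w).Nonempty) ∧
    (∀ w, (G.induce (B w)).Connected) ∧
    (Pairwise fun w₁ w₂ => Disjoint (B w₁) (B w₂)) ∧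
    (∀ w₁ w₂, H.Adj w₁ w₂ → ∃ v₁ ∈ B w₁, ∃ v₂ ∈ B w₂, G.Adj v₁ v₂)

/-- A graph is planar iff it has no `K₅` and no `K₃,₃` minor (Wagner's theorem). -/
def IsPlanar {V : Type} (G : SimpleGraph V) : Prop :=
  ¬ IsMinor (completeGraph (Fin 5)) G ∧
  ¬ IsMinor (completeBipartiteGraph (Fin 3) (Fin 3)) G

/-- `G` has thickness at most `t`: its edge set partitions into `t` planar subgraphs. -/
def ThicknessLE {V : Type} (G : SimpleGraph V) (t : ℕ) : Prop :=
  ∃ c : Sym2 V → Fin t, ∀ i : Fin t,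
    IsPlanar (SimpleGraph.fromEdgeSet {e | e ∈ G.edgeSet ∧ c e = i})

/-- The thickness of a graph. -/
noncomputable def thickness {V : Type} (G : SimpleGraph V) : ℕ :=
  sInf {t | ThicknessLE G t}

/-- `φ` is an odd coloring of `G` with `k` colors. -/
def IsOddColoring {V : Type} (G : SimpleGraph V) {k : ℕ} (φ : V → Fin k) : Prop :=
  (∀ ⦃u v⦄, G.Adj u v → φ u ≠ φ v) ∧
  ∀ v : V, (G.neighborSet v).Nonempty →
    ∃ c : Fin k, Odd ({u | u ∈ G.neighborSet v ∧ φ u = c}.ncard)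

/-- The odd chromatic number of `G`. -/
noncomputable def oddChrom {V : Type} (G : SimpleGraph V) : ℕ :=
  sInf {k | ∃ φ : V → Fin k, IsOddColoring G φ}

/-- `G` is odd `k⁺`-critical. -/
def OddCritical {V : Type} (G : SimpleGraph V) (k : ℕ) : Prop :=
  k ≤ oddChrom G ∧ ∀ H : G.Subgraph, H ≠ ⊤ → oddChrom H.coe < k

/-- A vertex is `n`-easy if its degree is odd or it has a neighbor of degree `2i`, `1 ≤ i ≤ n`. -/
def NEasy {V : Type} (G : SimpleGraph V) (n : ℕ) (v : V) : Prop :=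
  Odd (deg G v) ∨ ∃ u ∈ G.neighborSet v, ∃ i, 1 ≤ i ∧ i ≤ n ∧ deg G u = 2 * i

open Function

theorem Set.exists_odd_ncard_sep_eq {α β : Type*} (f : α → β) {s : Set α} (hs : Odd s.ncard) :
    ∃ b, Odd {a ∈ s | f a = b}.ncard := by
  classical
  lift s to Finset α using Set.finite_of_ncard_ne_zero hs.pos.ne'
  by_contra! h
  rw [Set.ncard_coe_finset, Finset.card_eq_sum_card_image f s, ← Nat.not_even_iff_odd] at hs
  refine hs (Finset.even_sum _ fun b _ => ?_)
  simpa [← Finset.coe_filter] using Nat.not_odd_iff_even.mp (h b)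

section OddColoring

variable {V : Type} {G : SimpleGraph V} {n : ℕ}

theorem isOddColoring_of_injective {φ : V → Fin n} (hφ : Injective φ) : IsOddColoring G φ := by
  refine ⟨fun u w h => hφ.ne h.ne, fun w ⟨u, hu⟩ => ⟨φ u, ?_⟩⟩
  rw [show {x | x ∈ G.neighborSet w ∧ φ x = φ u} = {u} from
    Set.ext fun x => ⟨fun hx => hφ hx.2, by rintro rfl; exact ⟨hu, rfl⟩⟩]
  simp

theorem IsOddColoring.comp_injective {m : ℕ} {φ : V → Fin m} (hφ : IsOddColoring G φ)
    {f : Fin m → Fin n} (hf : Injective f) : IsOddColoring G (f ∘ φ) := by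
  refine ⟨fun u w huw => hf.ne (hφ.1 huw), fun w hw => ?_⟩
  obtain ⟨c, hc⟩ := hφ.2 w hw
  exact ⟨f c, by simpa only [comp_apply, hf.eq_iff] using hc⟩

theorem IsOddColoring.oddChrom_le {φ : V → Fin n} (hφ : IsOddColoring G φ) : oddChrom G ≤ n :=
  Nat.sInf_le ⟨φ, hφ⟩

theorem exists_isOddColoring_of_oddChrom_le [Finite V] (h : oddChrom G ≤ n) :
    ∃ φ : V → Fin n, IsOddColoring G φ := by
  obtain ⟨φ, hφ⟩ : ∃ φ : V → Fin (oddChrom G), IsOddColoring G φ :=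
    Nat.sInf_mem (s := {k | ∃ φ : V → Fin k, IsOddColoring G φ})
      ⟨_, _, isOddColoring_of_injective (Finite.equivFin V).injective⟩
  exact ⟨_, hφ.comp_injective (Fin.castLE_injective h)⟩

theorem IsOddColoring.spanningCoe_extend {H : G.Subgraph} {φ : H.verts → Fin n}
    (hφ : IsOddColoring H.coe φ) (g : V → Fin n) :
    IsOddColoring H.spanningCoe (extend Subtype.val φ g) := by
  have hext : ∀ x : H.verts, extend Subtype.val φ g x = φ x :=
    Subtype.val_injective.extend_apply φ g
  refine ⟨fun u w huw => ?_, fun w ⟨u, hu⟩ => ?_⟩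
  · have := @hφ.1 ⟨u, H.edge_vert huw⟩ ⟨w, H.edge_vert (H.adj_symm huw)⟩ huw
    rwa [← hext, ← hext] at this
  · lift w to H.verts using H.edge_vert hu
    obtain ⟨c, hc⟩ := hφ.2 w ⟨⟨u, H.edge_vert (H.adj_symm hu)⟩, hu⟩
    have hfiber : {x | x ∈ H.spanningCoe.neighborSet w ∧ extend Subtype.val φ g x = c} =
        Subtype.val '' {y | y ∈ H.coe.neighborSet w ∧ φ y = c} := by
      ext x
      constructor
      · rintro ⟨hadj, rfl⟩
        exact ⟨⟨x, H.edge_vert (H.adj_symm hadj)⟩, ⟨hadj, (hext _).symm⟩, rfl⟩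
      · rintro ⟨y, ⟨hadj, rfl⟩, rfl⟩
        exact ⟨hadj, hext y⟩
    exact ⟨c, by rwa [hfiber, Set.ncard_image_of_injective _ Subtype.val_injective]⟩

end OddColoring

section DeleteVertex

variable {V : Type} {G : SimpleGraph V} {n : ℕ} {v : V}

theorem spanningCoe_top_deleteVerts_singleton (G : SimpleGraph V) (v : V) :
    ((⊤ : G.Subgraph).deleteVerts {v}).spanningCoe = G.deleteIncidenceSet v := by
  ext a b
  simp only [Subgraph.spanningCoe_adj, Subgraph.deleteVerts_adj, deleteIncidenceSet_adj,
    Subgraph.verts_top, Subgraph.top_adj, Set.mem_univ, Set.mem_singleton_iff]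
  tauto

theorem sep_neighborSet_update_eq [DecidableEq V] {φ : V → Fin n} {a c : Fin n} {w : V}
    (hw : w ≠ v) (hc : G.Adj w v → c ≠ a) :
    {u ∈ G.neighborSet w | update φ v a u = c} =
      {u ∈ (G.deleteIncidenceSet v).neighborSet w | φ u = c} := by
  ext u
  simp only [Set.mem_ofPred_eq, mem_neighborSet, deleteIncidenceSet_adj, update_apply]
  by_cases hu : u = v
  · subst hu; simp_all [eq_comm]
  · simp [hu, hw]

theorem IsOddColoring.update_of_deleteIncidenceSet [DecidableEq V] {φ : V → Fin n} {a : Fin n}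
    (hφ : IsOddColoring (G.deleteIncidenceSet v) φ) (hv : Odd (deg G v))
    (ha_proper : a ∉ φ '' G.neighborSet v)
    (ha_odd : ∀ w ∈ G.neighborSet v, ((G.deleteIncidenceSet v).neighborSet w).Nonempty →
      ∃ c ≠ a, Odd {u ∈ (G.deleteIncidenceSet v).neighborSet w | φ u = c}.ncard) :
    IsOddColoring G (update φ v a) := by
  refine ⟨fun u w huw => ?_, fun w hw => ?_⟩
  · simp only [update_apply]
    split_ifs with hu hw hw
    · exact absurd (hu.trans hw.symm) huw.ne
    · exact fun h => ha_proper ⟨w, hu ▸ huw, h.symm⟩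
    · exact fun h => ha_proper ⟨u, hw ▸ huw.symm, h⟩
    · exact hφ.1 (deleteIncidenceSet_adj.2 ⟨huw, hu, hw⟩)
  · obtain rfl | hwv := eq_or_ne w v
    · exact Set.exists_odd_ncard_sep_eq _ hv
    by_cases hN : ((G.deleteIncidenceSet v).neighborSet w).Nonempty
    · obtain ⟨c, hca, hc⟩ : ∃ c, (G.Adj w v → c ≠ a) ∧
          Odd {u ∈ (G.deleteIncidenceSet v).neighborSet w | φ u = c}.ncard := by
        by_cases hadj : G.Adj w v
        · obtain ⟨c, hca, hc⟩ := ha_odd w hadj.symm hN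
          exact ⟨c, fun _ => hca, hc⟩
        · obtain ⟨c, hc⟩ := hφ.2 w hN
          exact ⟨c, fun h => absurd h hadj, hc⟩
      exact ⟨c, by rwa [sep_neighborSet_update_eq hwv hca]⟩
    · have hNw : G.neighborSet w = {v} := hw.subset_singleton_iff.1 fun u hu => by
        by_contra huv
        exact hN ⟨u, deleteIncidenceSet_adj.2 ⟨hu, hwv, huv⟩⟩
      refine ⟨a, ?_⟩
      rw [hNw, show {u ∈ ({v} : Set V) | update φ v a u = a} = {v} by ext u; simp +contextual]
      exact Set.ncard_singleton v ▸ odd_one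

theorem IsOddColoring.exists_update_of_deleteIncidenceSet [DecidableEq V] {φ : V → Fin n}
    (hφ : IsOddColoring (G.deleteIncidenceSet v) φ) (hv : Odd (deg G v))
    (hn : 2 * deg G v < n) :
    ∃ a, IsOddColoring G (update φ v a) := by
  have hfin : (G.neighborSet v).Finite := Set.finite_of_ncard_ne_zero hv.pos.ne'
  have hoddColor_exists : ∀ w, ∃ c : Fin n, ((G.deleteIncidenceSet v).neighborSet w).Nonempty →
      Odd {u ∈ (G.deleteIncidenceSet v).neighborSet w | φ u = c}.ncard := fun w => by
    by_cases hN : ((G.deleteIncidenceSet v).neighborSet w).Nonempty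
    · exact (hφ.2 w hN).imp fun _ hc _ => hc
    · exact ⟨⟨0, by omega⟩, fun h => absurd h hN⟩
  choose oddColor hoddColor using hoddColor_exists
  set F := φ '' G.neighborSet v ∪ oddColor '' G.neighborSet v
  have hF : F.ncard < n := calc
    F.ncard ≤ (φ '' G.neighborSet v).ncard + (oddColor '' G.neighborSet v).ncard :=
      Set.ncard_union_le _ _
    _ ≤ deg G v + deg G v := add_le_add (Set.ncard_image_le hfin) (Set.ncard_image_le hfin)
    _ < n := by omega
  obtain ⟨a, ha⟩ := (Set.ne_univ_iff_exists_notMem F).1 fun h => by simp [h] at hF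
  rw [Set.mem_union, not_or] at ha
  refine ⟨a, hφ.update_of_deleteIncidenceSet hv ha.1 fun w hw hN => ?_⟩
  exact ⟨oddColor w, fun h => ha.2 ⟨w, hw, h⟩, hoddColor w hN⟩

end DeleteVertex

theorem oddCritical_degree_even_or_large_general {V : Type} [Fintype V] (G : SimpleGraph V)
    (k : ℕ) (hG : OddCritical G k) :
    ∀ v : V, Even (deg G v) ∨ k / 2 ≤ deg G v := by
  classical
  intro v
  by_contra! h
  obtain ⟨hodd, hlt⟩ := h
  rw [Nat.not_even_iff_odd] at hodd
  have hpos := hodd.pos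
  set H := (⊤ : G.Subgraph).deleteVerts {v}
  have hH : H ≠ ⊤ := fun h => by simpa [H] using congrArg (v ∈ ·.verts) h
  obtain ⟨φ, hφ⟩ := exists_isOddColoring_of_oddChrom_le (G := H.coe) (n := k - 1)
    (by have := hG.2 H hH; omega)
  have hψ := hφ.spanningCoe_extend fun _ => ⟨0, by omega⟩
  rw [spanningCoe_top_deleteVerts_singleton] at hψ
  obtain ⟨a, ha⟩ := hψ.exists_update_of_deleteIncidenceSet hodd (by omega)
  have := hG.1.trans ha.oddChrom_le
  omega

/-- In an odd `k⁺`-critical graph (`k ≥ 4`), every vertex has even degree or degree `≥ ⌊k/2⌋`. -/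
theorem oddCritical_degree_even_or_large {V : Type} [Fintype V] (G : SimpleGraph V)
    (k : ℕ) (hk : 4 ≤ k) (hG : OddCritical G k) :
    ∀ v : V, Even (deg G v) ∨ k / 2 ≤ deg G v :=
  oddCritical_degree_even_or_large_general G k hG
end

section
/- Let n ≥ 1 and k ≥ 4n + 2, and let G be an odd k⁺-critical graph. Then for every n-easy vertex v of G, 2·d(v) ≥ (Σ_{i=1}^{n} |N_{2i}(v)|) + |N_{n-ez}(v)| + k − 1, where N_{2i}(v) is the set of neighbors of v of degree exactly 2i and N_{n-ez}(v) is the set of n-easy neighbors of v. -/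
open SimpleGraph

section OddColoringProof
open Finset
set_option linter.unusedSectionVars false
attribute [local instance] Classical.propDecidable

section Engine
variable {V : Type} [Fintype V] {K : ℕ}
variable (G : SimpleGraph V)

noncomputable def cntF (ψ : V → Fin K) (x : V) (c : Fin K) : ℕ :=
  ((G.neighborFinset x).filter (fun u => ψ u = c)).card

lemma cntF_bridge (ψ : V → Fin K) (x : V) (c : Fin K) :
    {u | u ∈ G.neighborSet x ∧ ψ u = c}.ncard = cntF G ψ x c := by
  rw [cntF, ← Set.ncard_coe_finset]
  congr 1
  ext u
  simp [mem_neighborFinset, mem_neighborSet]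

lemma deg_eq_card (x : V) : deg G x = (G.neighborFinset x).card := by
  rw [deg, ← Set.ncard_coe_finset]
  congr 1
  ext u; simp [mem_neighborFinset, mem_neighborSet]

def badE (ψ : V → Fin K) : Set (V × V) := {p | G.Adj p.1 p.2 ∧ ψ p.1 = ψ p.2}
def badV (ψ : V → Fin K) : Set V :=
  {x | (G.neighborSet x).Nonempty ∧ ∀ c, ¬ Odd (cntF G ψ x c)}

noncomputable def brkSet (ψ : V → Fin K) (w : V) (t : Finset V) : Finset (Fin K) :=
  t.biUnion (fun x => univ.filter (fun b => b ≠ ψ w ∧ Odd (cntF G ψ x (ψ w)) ∧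
    Odd (cntF G ψ x b) ∧ ∀ c, Odd (cntF G ψ x c) → c = ψ w ∨ c = b))

variable {G}

lemma cntF_update_not_adj {ψ : V → Fin K} {w x : V} (h : ¬ G.Adj x w) (b : Fin K) (c : Fin K) :
    cntF G (Function.update ψ w b) x c = cntF G ψ x c := by
  unfold cntF
  congr 1
  apply filter_congr
  intro u hu
  rw [mem_neighborFinset] at hu
  have : u ≠ w := by rintro rfl; exact h hu
  simp [Function.update_of_ne this]

lemma cntF_update_other {ψ : V → Fin K} {w x : V} (b : Fin K) {c : Fin K}
    (hca : c ≠ ψ w) (hcb : c ≠ b) :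
    cntF G (Function.update ψ w b) x c = cntF G ψ x c := by
  unfold cntF
  congr 1
  ext u
  simp only [mem_filter]
  constructor
  · rintro ⟨hu, he⟩
    refine ⟨hu, ?_⟩
    rcases eq_or_ne u w with rfl | hne
    · rw [Function.update_self] at he; exact (hcb he.symm).elim
    · rwa [Function.update_of_ne hne] at he
  · rintro ⟨hu, he⟩
    refine ⟨hu, ?_⟩
    rcases eq_or_ne u w with rfl | hne
    · exact (hca he.symm).elim
    · rwa [Function.update_of_ne hne]

lemma cntF_update_new {ψ : V → Fin K} {w x : V} (h : G.Adj x w) {b : Fin K}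
    (hba : b ≠ ψ w) :
    cntF G (Function.update ψ w b) x b = cntF G ψ x b + 1 := by
  unfold cntF
  rw [show ((G.neighborFinset x).filter (fun u => Function.update ψ w b u = b))
      = insert w ((G.neighborFinset x).filter (fun u => ψ u = b)) from ?_]
  · rw [card_insert_of_notMem]
    simp only [mem_filter, mem_neighborFinset]
    rintro ⟨-, he⟩; exact hba he.symm
  · ext u
    simp only [mem_filter, mem_insert, mem_neighborFinset]
    rcases eq_or_ne u w with rfl | hne
    · simp [h, Function.update_self]
    · simp [Function.update_of_ne hne, hne]

lemma cntF_update_old {ψ : V → Fin K} {w x : V} (h : G.Adj x w) {b : Fin K}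
    (hba : b ≠ ψ w) :
    cntF G ψ x (ψ w) = cntF G (Function.update ψ w b) x (ψ w) + 1 := by
  unfold cntF
  rw [show ((G.neighborFinset x).filter (fun u => ψ u = ψ w))
      = insert w ((G.neighborFinset x).filter (fun u => Function.update ψ w b u = ψ w)) from ?_]
  · rw [card_insert_of_notMem]
    simp only [mem_filter, mem_neighborFinset]
    rintro ⟨-, he⟩
    rw [Function.update_self] at he; exact hba he
  · ext u
    simp only [mem_filter, mem_insert, mem_neighborFinset]
    rcases eq_or_ne u w with rfl | hne
    · simp [h, Function.update_self]
    · simp [Function.update_of_ne hne, hne]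

lemma odd_cntF_update_flip {ψ : V → Fin K} {w x : V} (h : G.Adj x w) {b c : Fin K}
    (hba : b ≠ ψ w) (hc : c = ψ w ∨ c = b) :
    (Odd (cntF G (Function.update ψ w b) x c) ↔ ¬ Odd (cntF G ψ x c)) := by
  rcases hc with rfl | rfl
  · rw [cntF_update_old h hba]
    simp [Nat.odd_add_one]
  · rw [cntF_update_new h hba]
    simp [Nat.odd_add_one]
lemma brkSet_card (ψ : V → Fin K) (w : V) (t : Finset V) :
    (brkSet G ψ w t).card ≤ t.card := by
  refine (Finset.card_biUnion_le).trans ?_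
  have : ∀ x ∈ t, (univ.filter (fun b => b ≠ ψ w ∧ Odd (cntF G ψ x (ψ w)) ∧
      Odd (cntF G ψ x b) ∧ ∀ c, Odd (cntF G ψ x c) → c = ψ w ∨ c = b)).card ≤ 1 := by
    intro x hx
    refine Finset.card_le_one.mpr ?_
    rintro b1 hb1 b2 hb2
    simp only [mem_filter] at hb1 hb2
    rcases hb2.2.2.2.2 b1 hb1.2.2.2.1 with h | h
    · exact absurd h hb1.2.1
    · exact h
  calc ∑ x ∈ t, _ ≤ ∑ x ∈ t, 1 := Finset.sum_le_sum this
    _ = t.card := by simp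

lemma exists_not_mem_of_card_lt {s : Finset (Fin K)} (h : s.card < K) : ∃ b, b ∉ s := by
  have : sᶜ.card = K - s.card := by rw [Finset.card_compl]; simp
  have hpos : 0 < sᶜ.card := by omega
  obtain ⟨b, hb⟩ := Finset.card_pos.mp hpos
  exact ⟨b, (Finset.mem_compl.mp hb)⟩
/-- The key preservation lemma: a "safe" recoloring creates no new bad edges or vertices. -/
lemma preserve {ψ : V → Fin K} {w : V} {b : Fin K} (hba : b ≠ ψ w)
    (himg : ∀ x, G.Adj w x → ψ x ≠ b)
    (hbrk : ∀ x, G.Adj w x →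
      ¬ (Odd (cntF G ψ x (ψ w)) ∧ Odd (cntF G ψ x b) ∧
         ∀ c, Odd (cntF G ψ x c) → c = ψ w ∨ c = b)) :
    badE G (Function.update ψ w b) ⊆ badE G ψ ∧
    badV G (Function.update ψ w b) ⊆ badV G ψ := by
  constructor
  · rintro ⟨p, q⟩ ⟨hadj, heq⟩
    by_cases hp : p = w
    · rw [hp] at hadj heq
      rw [Function.update_self] at heq
      have hq : q ≠ w := fun h => G.loopless.irrefl _ (h ▸ hadj)
      rw [Function.update_of_ne hq] at heq
      exact absurd heq.symm (himg q hadj)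
    · rw [Function.update_of_ne hp] at heq
      by_cases hq : q = w
      · rw [hq] at hadj heq
        rw [Function.update_self] at heq
        exact absurd heq (himg p (G.adj_symm hadj))
      · rw [Function.update_of_ne hq] at heq
        exact ⟨hadj, heq⟩
  · rintro x ⟨hne, hall⟩
    refine ⟨hne, ?_⟩
    intro c hodd
    by_cases hadj : G.Adj x w
    · -- w is a neighbor of x
      by_cases hc : c = ψ w ∨ c = b
      · -- then after the update, parity flipped, so cntF new is even... 
        -- we must derive a contradiction from hbrk
        have ha : Odd (cntF G ψ x (ψ w)) := by
          have := hall (ψ w)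
          rw [odd_cntF_update_flip hadj hba (Or.inl rfl)] at this
          exact not_not.mp this
        have hb : Odd (cntF G ψ x b) := by
          have := hall b
          rw [odd_cntF_update_flip hadj hba (Or.inr rfl)] at this
          exact not_not.mp this
        refine hbrk x (G.adj_symm hadj) ⟨ha, hb, ?_⟩
        intro c' hc'
        by_contra hc'n
        push_neg at hc'n
        have := hall c'
        rw [cntF_update_other b hc'n.1 hc'n.2] at this
        exact this hc'
      · push_neg at hc
        have := hall c
        rw [cntF_update_other b hc.1 hc.2] at this
        exact this hodd
    · have := hall c
      rw [cntF_update_not_adj hadj] at this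
      exact this hodd


variable {n : ℕ}

lemma fixEdge {ψ : V → Fin K} {u u' : V} (hadj : G.Adj u u') (heq : ψ u = ψ u')
    (hdeg : (G.neighborFinset u).card ≤ 2 * n) (hK : 4 * n < K) :
    ∃ ψ' : V → Fin K, badE G ψ' ⊆ badE G ψ ∧ badV G ψ' ⊆ badV G ψ ∧
      (u, u') ∉ badE G ψ' := by
  classical
  set N := G.neighborFinset u with hN
  set forb := N.image ψ ∪ brkSet G ψ u N with hforb
  have hcard : forb.card < K := by
    calc forb.card ≤ (N.image ψ).card + (brkSet G ψ u N).card := Finset.card_union_le _ _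
      _ ≤ N.card + N.card := Nat.add_le_add (Finset.card_image_le) (brkSet_card ψ u N)
      _ ≤ 4 * n := by omega
      _ < K := hK
  obtain ⟨b, hb⟩ := exists_not_mem_of_card_lt hcard
  have hbimg : ∀ x, G.Adj u x → ψ x ≠ b := by
    intro x hx hxe
    exact hb (Finset.mem_union_left _ (Finset.mem_image.mpr ⟨x, by
      rw [mem_neighborFinset]; exact hx, hxe⟩))
  have hba : b ≠ ψ u := by
    intro hbe
    exact hbimg u' hadj (by rw [← heq, ← hbe])
  have hbbrk : ∀ x, G.Adj u x → ¬ (Odd (cntF G ψ x (ψ u)) ∧ Odd (cntF G ψ x b) ∧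
      ∀ c, Odd (cntF G ψ x c) → c = ψ u ∨ c = b) := by
    intro x hx htrip
    refine hb (Finset.mem_union_right _ ?_)
    refine Finset.mem_biUnion.mpr ⟨x, by rw [hN, mem_neighborFinset]; exact hx, ?_⟩
    simp only [mem_filter, mem_univ, true_and]
    exact ⟨hba, htrip⟩
  obtain ⟨hE, hV⟩ := preserve hba hbimg hbbrk
  refine ⟨Function.update ψ u b, hE, hV, ?_⟩
  rintro ⟨-, hbad⟩
  have hu' : u' ≠ u := fun h => G.loopless.irrefl u (h ▸ hadj)
  rw [Function.update_self, Function.update_of_ne hu'] at hbad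
  exact hbimg u' hadj hbad.symm

lemma fixParity {ψ : V → Fin K} {x0 w : V} (hx0 : x0 ∈ badV G ψ) (hadj : G.Adj x0 w)
    (hdeg : (G.neighborFinset w).card ≤ 2 * n) (hn : 1 ≤ n) (hK : 4 * n < K) :
    ∃ ψ' : V → Fin K, badE G ψ' ⊆ badE G ψ ∧ badV G ψ' ⊆ badV G ψ ∧
      x0 ∉ badV G ψ' := by
  classical
  set N := G.neighborFinset w with hN
  have hx0N : x0 ∈ N := by rw [hN, mem_neighborFinset]; exact G.adj_symm hadj
  set forb := (N.image ψ ∪ brkSet G ψ w (N.erase x0)) ∪ {ψ w} with hforb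
  have hNpos : 1 ≤ N.card := Finset.card_pos.mpr ⟨x0, hx0N⟩
  have hcard : forb.card < K := by
    have h1 : (N.image ψ).card ≤ 2 * n := le_trans Finset.card_image_le hdeg
    have h2 : (brkSet G ψ w (N.erase x0)).card ≤ 2 * n - 1 := by
      refine le_trans (brkSet_card ψ w _) ?_
      rw [Finset.card_erase_of_mem hx0N]
      omega
    calc forb.card ≤ ((N.image ψ).card + (brkSet G ψ w (N.erase x0)).card) + 1 := by
          refine le_trans (Finset.card_union_le _ _) ?_
          exact Nat.add_le_add (Finset.card_union_le _ _) (by simp)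
      _ ≤ 4 * n := by omega
      _ < K := hK
  obtain ⟨b, hb⟩ := exists_not_mem_of_card_lt hcard
  have hba : b ≠ ψ w := by
    intro h
    exact hb (Finset.mem_union_right _ (by simp [h]))
  have hbimg : ∀ x, G.Adj w x → ψ x ≠ b := by
    intro x hx hxe
    refine hb (Finset.mem_union_left _ (Finset.mem_union_left _
      (Finset.mem_image.mpr ⟨x, by rw [hN, mem_neighborFinset]; exact hx, hxe⟩)))
  have hbbrk : ∀ x, G.Adj w x → ¬ (Odd (cntF G ψ x (ψ w)) ∧ Odd (cntF G ψ x b) ∧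
      ∀ c, Odd (cntF G ψ x c) → c = ψ w ∨ c = b) := by
    intro x hx htrip
    by_cases hxx : x = x0
    · exact hx0.2 (ψ w) (hxx ▸ htrip.1)
    · refine hb (Finset.mem_union_left _ (Finset.mem_union_right _ ?_))
      refine Finset.mem_biUnion.mpr ⟨x, ?_, ?_⟩
      · rw [Finset.mem_erase]
        exact ⟨hxx, by rw [hN, mem_neighborFinset]; exact hx⟩
      · simp only [mem_filter, mem_univ, true_and]
        exact ⟨hba, htrip⟩
  obtain ⟨hE, hV⟩ := preserve hba hbimg hbbrk
  refine ⟨Function.update ψ w b, hE, hV, ?_⟩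
  rintro ⟨-, hall⟩
  have := hall b
  rw [odd_cntF_update_flip hadj hba (Or.inr rfl)] at this
  exact this (hx0.2 b)

/-- The engine: repeatedly fix bad edges/vertices. -/
lemma engine (hn : 1 ≤ n) (hK : 4 * n < K) : ∀ M : ℕ, ∀ ψ : V → Fin K,
    (badE G ψ).ncard + (badV G ψ).ncard ≤ M →
    (∀ p ∈ badE G ψ, (G.neighborFinset p.1).card ≤ 2 * n ∨
        (G.neighborFinset p.2).card ≤ 2 * n) →
    (∀ x ∈ badV G ψ, ∃ w, G.Adj x w ∧ (G.neighborFinset w).card ≤ 2 * n) →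
    ∃ ψ' : V → Fin K, badE G ψ' = ∅ ∧ badV G ψ' = ∅ := by
  intro M
  induction M with
  | zero =>
    intro ψ hM _ _
    refine ⟨ψ, ?_, ?_⟩
    · have : (badE G ψ).ncard = 0 := by omega
      exact Set.ncard_eq_zero (Set.toFinite _) |>.mp this
    · have : (badV G ψ).ncard = 0 := by omega
      exact Set.ncard_eq_zero (Set.toFinite _) |>.mp this
  | succ M ih =>
    intro ψ hM hEs hVs
    by_cases hEe : badE G ψ = ∅
    · by_cases hVe : badV G ψ = ∅
      · exact ⟨ψ, hEe, hVe⟩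
      · -- fix a bad vertex
        obtain ⟨x0, hx0⟩ := Set.nonempty_iff_ne_empty.mpr hVe
        obtain ⟨w, hadj, hdeg⟩ := hVs x0 hx0
        obtain ⟨ψ', hE, hV, hx0'⟩ := fixParity hx0 hadj hdeg hn hK
        refine ih ψ' ?_ (fun p hp => hEs p (hE hp)) (fun x hx => hVs x (hV hx))
        have hssV : badV G ψ' ⊂ badV G ψ := ⟨hV, fun hsub => hx0' (hsub hx0)⟩
        have h1 : (badV G ψ').ncard < (badV G ψ).ncard :=
          Set.ncard_lt_ncard hssV (Set.toFinite _)
        have h2 : (badE G ψ').ncard ≤ (badE G ψ).ncard :=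
          Set.ncard_le_ncard hE (Set.toFinite _)
        omega
    · -- fix a bad edge
      obtain ⟨p, hp⟩ := Set.nonempty_iff_ne_empty.mpr hEe
      rcases hEs p hp with hd | hd
      · obtain ⟨ψ', hE, hV, hp'⟩ := fixEdge hp.1 hp.2 hd hK
        refine ih ψ' ?_ (fun q hq => hEs q (hE hq)) (fun x hx => hVs x (hV hx))
        have hssE : badE G ψ' ⊂ badE G ψ := ⟨hE, fun hsub => hp' (hsub ⟨hp.1, hp.2⟩)⟩
        have h1 : (badE G ψ').ncard < (badE G ψ).ncard :=
          Set.ncard_lt_ncard hssE (Set.toFinite _)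
        have h2 : (badV G ψ').ncard ≤ (badV G ψ).ncard :=
          Set.ncard_le_ncard hV (Set.toFinite _)
        omega
      · have hp2 : (p.2, p.1) ∈ badE G ψ := ⟨G.adj_symm hp.1, hp.2.symm⟩
        obtain ⟨ψ', hE, hV, hp'⟩ := fixEdge hp2.1 hp2.2 hd hK
        refine ih ψ' ?_ (fun q hq => hEs q (hE hq)) (fun x hx => hVs x (hV hx))
        have hssE : badE G ψ' ⊂ badE G ψ := ⟨hE, fun hsub => hp' (hsub hp2)⟩
        have h1 : (badE G ψ').ncard < (badE G ψ).ncard :=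
          Set.ncard_lt_ncard hssE (Set.toFinite _)
        have h2 : (badV G ψ').ncard ≤ (badV G ψ).ncard :=
          Set.ncard_le_ncard hV (Set.toFinite _)
        omega
end Engine

section Chrom
variable {W : Type} [Finite W] {K : ℕ} (H : SimpleGraph W)

lemma isOddColoring_comp_castLE {m : ℕ} (hm : m ≤ K) {φ : W → Fin m}
    (h : IsOddColoring H φ) : IsOddColoring H (Fin.castLE hm ∘ φ) := by
  constructor
  · intro u v hadj he
    exact h.1 hadj (Fin.castLE_injective hm he)
  · intro v hv
    obtain ⟨c, hc⟩ := h.2 v hv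
    refine ⟨Fin.castLE hm c, ?_⟩
    have : {u | u ∈ H.neighborSet v ∧ (Fin.castLE hm ∘ φ) u = Fin.castLE hm c}
        = {u | u ∈ H.neighborSet v ∧ φ u = c} := by
      ext u
      simp only [Set.mem_setOf_eq, Function.comp_apply, and_congr_right_iff]
      intro _
      exact ⟨fun he => Fin.castLE_injective hm he, fun he => by rw [he]⟩
    rwa [this]

lemma isOddColoring_of_injective_s4 {m : ℕ} {φ : W → Fin m} (hinj : Function.Injective φ) :
    IsOddColoring H φ := by
  constructor
  · intro u v hadj he
    exact H.ne_of_adj hadj (hinj he)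
  · intro v hv
    obtain ⟨w, hw⟩ := hv
    refine ⟨φ w, ?_⟩
    have : {u | u ∈ H.neighborSet v ∧ φ u = φ w} = {w} := by
      ext u
      simp only [Set.mem_setOf_eq, Set.mem_singleton_iff]
      constructor
      · rintro ⟨-, he⟩; exact hinj he
      · rintro rfl; exact ⟨hw, rfl⟩
    rw [this, Set.ncard_singleton]
    exact odd_one
  
lemma exists_oddColoring_of_le (h : oddChrom H ≤ K) :
    ∃ φ : W → Fin K, IsOddColoring H φ := by
  obtain ⟨m, ⟨e⟩⟩ := Finite.exists_equiv_fin W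
  have hmem : m ∈ {k | ∃ φ : W → Fin k, IsOddColoring H φ} :=
    ⟨e, isOddColoring_of_injective_s4 H e.injective⟩
  have hinf := Nat.sInf_mem (Set.nonempty_of_mem hmem)
  obtain ⟨φ1, hφ1⟩ := hinf
  exact ⟨Fin.castLE h ∘ φ1, isOddColoring_comp_castLE H h hφ1⟩

lemma oddChrom_le_of_coloring {φ : W → Fin K} (h : IsOddColoring H φ) :
    oddChrom H ≤ K := Nat.sInf_le ⟨φ, h⟩
end Chrom

section Parity
variable {V : Type} {K : ℕ}

lemma card_mod_two_eq (T : Finset V) (ψ : V → Fin K) :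
    T.card % 2
      = (univ.filter fun c => Odd ((T.filter (fun u => ψ u = c)).card)).card % 2 := by
  classical
  have h1 : T.card = ∑ c : Fin K, (T.filter (fun u => ψ u = c)).card :=
    Finset.card_eq_sum_card_fiberwise (fun u _ => mem_univ _)
  rw [h1, Finset.sum_nat_mod]
  congr 1
  have h2 : ∀ c : Fin K, (T.filter (fun u => ψ u = c)).card % 2
      = if Odd ((T.filter (fun u => ψ u = c)).card) then 1 else 0 := by
    intro c
    rcases Nat.even_or_odd ((T.filter (fun u => ψ u = c)).card) with he | ho
    · rw [if_neg (Nat.not_odd_iff_even.mpr he), Nat.even_iff.mp he]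
    · rw [if_pos ho, Nat.odd_iff.mp ho]
  rw [Finset.sum_congr rfl (fun c _ => h2 c), Finset.sum_boole]
  simp

lemma even_card_of_all_even (T : Finset V) (ψ : V → Fin K)
    (h : ∀ c, ¬ Odd ((T.filter (fun u => ψ u = c)).card)) : T.card % 2 = 0 := by
  rw [card_mod_two_eq T ψ]
  rw [Finset.filter_false_of_mem (fun c _ => h c)]
  simp

lemma odd_card_of_unique_odd (T : Finset V) (ψ : V → Fin K) (α : Fin K)
    (h1 : Odd ((T.filter (fun u => ψ u = α)).card))
    (h2 : ∀ c, c ≠ α → ¬ Odd ((T.filter (fun u => ψ u = c)).card)) : T.card % 2 = 1 := by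
  rw [card_mod_two_eq T ψ]
  have : (univ.filter fun c => Odd ((T.filter (fun u => ψ u = c)).card)) = {α} := by
    ext c
    simp only [mem_filter, mem_univ, true_and, mem_singleton]
    constructor
    · intro hc
      by_contra hne
      exact h2 c hne hc
    · rintro rfl; exact h1
  rw [this]
  simp
end Parity

section Base
variable {V : Type} [Fintype V] {G : SimpleGraph V} {k : ℕ}

lemma exists_base_coloring (hG : OddCritical G k) (hk : 2 ≤ k) (v : V) :
    ∃ φ : V → Fin (k-1),
      (∀ ⦃x y⦄, x ≠ v → y ≠ v → G.Adj x y → φ x ≠ φ y) ∧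
      (∀ x, x ≠ v → ∀ y, G.Adj x y → y ≠ v →
        ∃ c, Odd ((((G.neighborFinset x).erase v).filter (fun u => φ u = c)).card) ) := by
  classical
  set H : G.Subgraph := (⊤ : G.Subgraph).deleteVerts {v} with hH
  have hverts : H.verts = Set.univ \ {v} := by
    rw [hH, Subgraph.deleteVerts_verts, Subgraph.verts_top]
  have hne : H ≠ ⊤ := by
    intro h
    have : v ∈ H.verts := by rw [h, Subgraph.verts_top]; trivial
    rw [hverts] at this
    exact this.2 rfl
  have hlt : oddChrom H.coe < k := hG.2 H hne
  obtain ⟨φH, hφH⟩ := exists_oddColoring_of_le H.coe (K := k - 1) (by omega)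
  have hmem : ∀ u : V, u ≠ v → u ∈ H.verts := by
    intro u hu
    rw [hverts]
    exact ⟨trivial, hu⟩
  refine ⟨fun u => if h : u = v then ⟨0, by omega⟩ else φH ⟨u, hmem u h⟩, ?_, ?_⟩
  · intro x y hx hy hadj
    simp only []
    rw [dif_neg hx, dif_neg hy]
    have hadj' : H.coe.Adj ⟨x, hmem x hx⟩ ⟨y, hmem y hy⟩ := by
      simp only [Subgraph.coe_adj, hH, Subgraph.deleteVerts_adj, Subgraph.verts_top,
        Subgraph.top_adj, Set.mem_univ, true_and, Set.mem_singleton_iff]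
      exact ⟨hx, hy, hadj⟩
    exact hφH.1 hadj'
  · intro x hx y hxy hy
    have hadj' : H.coe.Adj ⟨x, hmem x hx⟩ ⟨y, hmem y hy⟩ := by
      simp only [Subgraph.coe_adj, hH, Subgraph.deleteVerts_adj, Subgraph.verts_top,
        Subgraph.top_adj, Set.mem_univ, true_and, Set.mem_singleton_iff]
      exact ⟨hx, hy, hxy⟩
    obtain ⟨c, hc⟩ := hφH.2 ⟨x, hmem x hx⟩ ⟨⟨y, hmem y hy⟩, hadj'⟩
    refine ⟨c, ?_⟩
    have himg : Subtype.val '' {u | u ∈ H.coe.neighborSet ⟨x, hmem x hx⟩ ∧ φH u = c}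
        = ↑(((G.neighborFinset x).erase v).filter
            (fun u => (if h : u = v then (⟨0, by omega⟩ : Fin (k-1)) else φH ⟨u, hmem u h⟩) = c)) := by
      ext u
      simp only [Set.mem_image, Set.mem_setOf_eq, Finset.coe_filter, mem_erase,
        mem_neighborFinset, mem_neighborSet]
      constructor
      · rintro ⟨⟨u', hu'⟩, ⟨hadj2, hval⟩, rfl⟩
        have huv : u' ≠ v := by
          intro h
          rw [hverts] at hu'
          exact hu'.2 h
        refine ⟨⟨huv, ?_⟩, ?_⟩
        · have := hadj2
          simp only [Subgraph.coe_adj, hH, Subgraph.deleteVerts_adj, Subgraph.verts_top,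
            Subgraph.top_adj, Set.mem_univ, true_and, Set.mem_singleton_iff] at this
          exact this.2.2
        · rw [dif_neg huv]
          convert hval using 2
      · rintro ⟨⟨huv, hadj2⟩, hval⟩
        rw [dif_neg huv] at hval
        refine ⟨⟨u, hmem u huv⟩, ⟨?_, hval⟩, rfl⟩
        simp only [Subgraph.coe_adj, hH, Subgraph.deleteVerts_adj, Subgraph.verts_top,
          Subgraph.top_adj, Set.mem_univ, true_and, Set.mem_singleton_iff]
        exact ⟨hx, huv, hadj2⟩
    have hcard : {u | u ∈ H.coe.neighborSet ⟨x, hmem x hx⟩ ∧ φH u = c}.ncard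
        = (((G.neighborFinset x).erase v).filter
            (fun u => (if h : u = v then (⟨0, by omega⟩ : Fin (k-1)) else φH ⟨u, hmem u h⟩) = c)).card := by
      rw [← Set.ncard_image_of_injective _ Subtype.val_injective, himg, Set.ncard_coe_finset]
    rwa [hcard] at hc
end Base

/-- generic set/finset bridge -/
lemma nbr_ncard_bridge {V : Type} [Fintype V] (G : SimpleGraph V) (v : V) (P : V → Prop) [DecidablePred P] :
    {u | u ∈ G.neighborSet v ∧ P u}.ncard = ((G.neighborFinset v).filter P).card := by
  classical
  rw [← Set.ncard_coe_finset]
  congr 1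
  ext u
  simp [mem_neighborFinset, mem_neighborSet]

/-- For an odd `k⁺`-critical graph with `k ≥ 4n+2`, every `n`-easy vertex `v` satisfies
`2d(v) ≥ (Σ_{i=1}^n |N_{2i}(v)|) + |N_{n-ez}(v)| + k − 1`. -/
theorem oddCritical_nEasy_degree_bound {V : Type} [Fintype V] (G : SimpleGraph V)
    (n k : ℕ) (hn : 1 ≤ n) (hk : 4 * n + 2 ≤ k) (hG : OddCritical G k) :
    ∀ v : V, NEasy G n v →
      (∑ i ∈ Finset.Icc 1 n, {u | u ∈ G.neighborSet v ∧ deg G u = 2 * i}.ncard) +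
        {u | u ∈ G.neighborSet v ∧ NEasy G n u}.ncard + k ≤ 2 * deg G v + 1 := by
  classical
  intro v hv
  by_contra hcon
  push_neg at hcon
  -- abbreviations
  set N : Finset V := G.neighborFinset v with hN
  obtain ⟨φ, hProper, hPodd⟩ := exists_base_coloring hG (by omega) v
  set cnt' : V → Fin (k-1) → ℕ :=
    fun x c => (((G.neighborFinset x).erase v).filter (fun u => φ u = c)).card with hcnt'
  set Sm : V → Prop := fun u => ∃ i, 1 ≤ i ∧ i ≤ n ∧ deg G u = 2 * i with hSm
  set Fu : V → Finset (Fin (k-1)) := fun u =>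
    (if Sm u then (∅ : Finset (Fin (k-1))) else {φ u}) ∪
    (if NEasy G n u then (∅ : Finset (Fin (k-1)))
      else univ.filter (fun c => ∀ c', Odd (cnt' u c') ↔ c' = c)) with hFu
  set Ffin : Finset (Fin (k-1)) := N.biUnion Fu with hFfin
  -- cardinality of Fu
  have hFucard : ∀ u, (Fu u).card + (if Sm u then 1 else 0) + (if NEasy G n u then 1 else 0) ≤ 2 := by
    intro u
    have h2 : (if NEasy G n u then (∅ : Finset (Fin (k-1)))
        else univ.filter (fun c => ∀ c', Odd (cnt' u c') ↔ c' = c)).card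
        + (if NEasy G n u then 1 else 0) ≤ 1 := by
      by_cases h : NEasy G n u
      · simp [h]
      · simp only [h, if_false, if_neg h]
        have : (univ.filter (fun c => ∀ c', Odd (cnt' u c') ↔ c' = c)).card ≤ 1 := by
          refine Finset.card_le_one.mpr ?_
          rintro c1 hc1 c2 hc2
          simp only [mem_filter, mem_univ, true_and] at hc1 hc2
          exact (hc2 c1).mp ((hc1 c1).mpr rfl)
        omega
    have h1 : (if Sm u then (∅ : Finset (Fin (k-1))) else {φ u}).card
        + (if Sm u then 1 else 0) ≤ 1 := by
      by_cases h : Sm u <;> simp [h]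
    have hle : (Fu u).card ≤ (if Sm u then (∅ : Finset (Fin (k-1))) else {φ u}).card
        + (if NEasy G n u then (∅ : Finset (Fin (k-1)))
          else univ.filter (fun c => ∀ c', Odd (cnt' u c') ↔ c' = c)).card := by
      simp only [hFu]
      exact Finset.card_union_le _ _
    omega

  -- bridge for the sum A
  have hA : (∑ i ∈ Finset.Icc 1 n, {u | u ∈ G.neighborSet v ∧ deg G u = 2 * i}.ncard)
      = (N.filter Sm).card := by
    have h1 : ∀ i ∈ Finset.Icc 1 n,
        {u | u ∈ G.neighborSet v ∧ deg G u = 2 * i}.ncard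
          = (N.filter (fun u => deg G u = 2 * i)).card :=
      fun i _ => nbr_ncard_bridge G v _
    rw [Finset.sum_congr rfl h1]
    have h2 : N.filter Sm
        = (Finset.Icc 1 n).biUnion (fun i => N.filter (fun u => deg G u = 2 * i)) := by
      ext u
      simp only [mem_filter, mem_biUnion, mem_Icc, hSm]
      constructor
      · rintro ⟨hu, i, h1i, h2i, h3i⟩
        exact ⟨i, ⟨h1i, h2i⟩, hu, h3i⟩
      · rintro ⟨i, ⟨h1i, h2i⟩, hu, h3i⟩
        exact ⟨hu, i, h1i, h2i, h3i⟩
    rw [h2, Finset.card_biUnion]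
    intro i hi j hj hij
    rw [Function.onFun, Finset.disjoint_left]
    intro u hui huj
    simp only [mem_filter] at hui huj
    omega
  have hE : {u | u ∈ G.neighborSet v ∧ NEasy G n u}.ncard
      = (N.filter (NEasy G n)).card := nbr_ncard_bridge G v _
  -- total cardinality bound for Ffin
  have hsum : Ffin.card + (N.filter Sm).card + (N.filter (NEasy G n)).card ≤ 2 * N.card := by
    have h1 : Ffin.card ≤ ∑ u ∈ N, (Fu u).card := Finset.card_biUnion_le
    have h2 : (N.filter Sm).card = ∑ u ∈ N, (if Sm u then 1 else 0) := by
      rw [Finset.card_filter]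
    have h3 : (N.filter (NEasy G n)).card = ∑ u ∈ N, (if NEasy G n u then 1 else 0) := by
      rw [Finset.card_filter]
    have h4 : (∑ u ∈ N, (Fu u).card) + (∑ u ∈ N, (if Sm u then 1 else 0))
        + (∑ u ∈ N, (if NEasy G n u then 1 else 0)) ≤ 2 * N.card := by
      rw [← Finset.sum_add_distrib, ← Finset.sum_add_distrib]
      calc ∑ u ∈ N, ((Fu u).card + (if Sm u then 1 else 0) + (if NEasy G n u then 1 else 0))
          ≤ ∑ _u ∈ N, 2 := Finset.sum_le_sum (fun u _ => hFucard u)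
        _ = 2 * N.card := by rw [Finset.sum_const, smul_eq_mul]; ring
    omega
  have hdegv : N.card = deg G v := (deg_eq_card G v).symm
  -- find the free color α
  have hFlt : Ffin.card < k - 1 := by
    rw [hA, hE] at hcon
    omega
  obtain ⟨α, hα⟩ := exists_not_mem_of_card_lt hFlt
  have hkey1 : ∀ u ∈ N, ¬ Sm u → φ u ≠ α := by
    intro u hu hsm heq
    refine hα (Finset.mem_biUnion.mpr ⟨u, hu, ?_⟩)
    simp only [hFu]
    refine Finset.mem_union_left _ ?_
    rw [if_neg hsm, Finset.mem_singleton]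
    exact heq.symm

  have hkey2 : ∀ u ∈ N, ¬ NEasy G n u → ¬ (∀ c', Odd (cnt' u c') ↔ c' = α) := by
    intro u hu hne hiff
    refine hα (Finset.mem_biUnion.mpr ⟨u, hu, ?_⟩)
    simp only [hFu]
    refine Finset.mem_union_right _ ?_
    rw [if_neg hne]
    simp only [mem_filter, mem_univ, true_and]
    exact hiff
  -- the extended coloring
  set ψ0 : V → Fin (k-1) := Function.update φ v α with hψ0
  have hψ0v : ψ0 v = α := by rw [hψ0]; exact Function.update_self _ _ _
  have hψ0ne : ∀ u, u ≠ v → ψ0 u = φ u := by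
    intro u hu; rw [hψ0]; exact Function.update_of_ne hu _ _
  have herase : ∀ (x : V) (c : Fin (k-1)),
      ((G.neighborFinset x).erase v).filter (fun u => ψ0 u = c)
        = ((G.neighborFinset x).erase v).filter (fun u => φ u = c) := by
    intro x c
    refine Finset.filter_congr ?_
    intro u hu
    rw [hψ0ne u (Finset.mem_erase.mp hu).1]
  have hcnt1 : ∀ x, ¬ G.Adj x v → ∀ c, cntF G ψ0 x c = cnt' x c := by
    intro x hxv c
    have hvn : v ∉ G.neighborFinset x := by rw [mem_neighborFinset]; exact hxv
    have e1 : cntF G ψ0 x c = ((G.neighborFinset x).filter (fun u => ψ0 u = c)).card := rfl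
    rw [e1, hcnt']
    rw [← Finset.erase_eq_of_notMem hvn, herase]
  have hcnt2 : ∀ x, G.Adj v x → ∀ c,
      cntF G ψ0 x c = cnt' x c + (if c = α then 1 else 0) := by
    intro x hvx c
    have hvn : v ∈ G.neighborFinset x := by rw [mem_neighborFinset]; exact G.adj_symm hvx
    have hsplit : G.neighborFinset x = insert v ((G.neighborFinset x).erase v) :=
      (Finset.insert_erase hvn).symm
    have e1 : cntF G ψ0 x c = ((G.neighborFinset x).filter (fun u => ψ0 u = c)).card := rfl
    rw [e1, hsplit, Finset.filter_insert]
    by_cases hcα : c = α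
    · rw [if_pos (by rw [hψ0v, hcα])]
      rw [Finset.card_insert_of_notMem (fun hmem =>
        (Finset.mem_erase.mp (Finset.mem_filter.mp hmem).1).1 rfl)]
      rw [herase, if_pos hcα, hcnt']
    · rw [if_neg (by rw [hψ0v]; exact fun h => hcα h.symm)]
      rw [herase, if_neg hcα, hcnt', Nat.add_zero]
  -- engine preconditions
  have hEs : ∀ p ∈ badE G ψ0, (G.neighborFinset p.1).card ≤ 2 * n ∨
      (G.neighborFinset p.2).card ≤ 2 * n := by
    rintro ⟨x, y⟩ ⟨hadj, heq⟩
    simp only at hadj heq ⊢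
    by_cases hx : x = v
    · rw [hx] at hadj heq
      have hyv : y ≠ v := fun h => G.loopless.irrefl v (h ▸ hadj)
      have hyN : y ∈ N := by rw [hN, mem_neighborFinset]; exact hadj
      rw [hψ0v, hψ0ne y hyv] at heq
      have hsm : Sm y := by
        by_contra hsm
        exact hkey1 y hyN hsm heq.symm
      obtain ⟨i, h1i, h2i, h3i⟩ := hsm
      right
      rw [← deg_eq_card, h3i]
      omega
    · by_cases hy : y = v
      · rw [hy] at hadj heq
        have hxv : x ≠ v := hx
        have hxN : x ∈ N := by rw [hN, mem_neighborFinset]; exact G.adj_symm hadj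
        rw [hψ0v, hψ0ne x hxv] at heq
        have hsm : Sm x := by
          by_contra hsm
          exact hkey1 x hxN hsm heq
        obtain ⟨i, h1i, h2i, h3i⟩ := hsm
        left
        rw [← deg_eq_card, h3i]
        omega
      · rw [hψ0ne x hx, hψ0ne y hy] at heq
        exact absurd heq (hProper hx hy hadj)
  have hVs : ∀ x ∈ badV G ψ0, ∃ w, G.Adj x w ∧ (G.neighborFinset w).card ≤ 2 * n := by
    rintro x ⟨hnon, hall⟩
    by_cases hx : x = v
    · rw [hx] at hall
      have hnadj : ¬ G.Adj v v := G.loopless.irrefl v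
      have heven : N.card % 2 = 0 := by
        refine even_card_of_all_even N φ ?_
        intro c
        have := hall c
        rw [hcnt1 v hnadj c] at this
        simp only [hcnt'] at this
        rwa [Finset.erase_eq_of_notMem (G.notMem_neighborFinset_self v)] at this
      have hdeven : ¬ Odd (deg G v) := by
        rw [deg_eq_card, Nat.odd_iff, ← hN]
        omega
      rcases hv with hodd | ⟨u, hu, i, h1i, h2i, h3i⟩
      · exact absurd hodd hdeven
      · refine ⟨u, hx ▸ hu, ?_⟩
        rw [← deg_eq_card, h3i]
        omega
    · by_cases hxadj : G.Adj v x
      · have hxN : x ∈ N := by rw [hN, mem_neighborFinset]; exact hxadj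
        have h1 : Odd (cnt' x α) := by
          have := hall α
          rw [hcnt2 x hxadj α, if_pos rfl] at this
          rw [Nat.odd_iff] at this ⊢
          omega
        have h2 : ∀ c, c ≠ α → ¬ Odd (cnt' x c) := by
          intro c hc
          have := hall c
          rwa [hcnt2 x hxadj c, if_neg hc, Nat.add_zero] at this
        have hvn : v ∈ G.neighborFinset x := by
          rw [mem_neighborFinset]; exact G.adj_symm hxadj
        have hodd1 : ((G.neighborFinset x).erase v).card % 2 = 1 := by
          refine odd_card_of_unique_odd _ φ α ?_ ?_
          · simp only [hcnt'] at h1; exact h1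
          · intro c hc; have := h2 c hc; simp only [hcnt'] at this; exact this
        have hdegx : ¬ Odd (deg G x) := by
          rw [Finset.card_erase_of_mem hvn] at hodd1
          have hle : 1 ≤ (G.neighborFinset x).card := Finset.card_pos.mpr ⟨v, hvn⟩
          rw [deg_eq_card, Nat.odd_iff]
          omega
        have hEasy : NEasy G n x := by
          by_contra hne
          refine hkey2 x hxN hne ?_
          intro c'
          constructor
          · intro ho
            by_contra hc
            exact h2 c' hc ho
          · rintro rfl
            exact h1
        rcases hEasy with hodd | ⟨u, hu, i, h1i, h2i, h3i⟩
        · exact absurd hodd hdegx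
        · refine ⟨u, hu, ?_⟩
          rw [← deg_eq_card, h3i]
          omega
      · obtain ⟨y, hy⟩ := hnon
        have hxv : ¬ G.Adj x v := fun h => hxadj (G.adj_symm h)
        have hyv : y ≠ v := by
          intro h
          rw [mem_neighborSet, h] at hy
          exact hxv hy
        rw [mem_neighborSet] at hy
        obtain ⟨c, hc⟩ := hPodd x hx y hy hyv
        have := hall c
        rw [hcnt1 x hxv c] at this
        simp only [hcnt'] at this
        exact (this hc).elim
  -- run the engine
  obtain ⟨ψ', hE', hV'⟩ := engine (G := G) hn (show 4 * n < k - 1 by omega)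
    ((badE G ψ0).ncard + (badV G ψ0).ncard) ψ0 le_rfl hEs hVs
  have hcol : IsOddColoring G ψ' := by
    constructor
    · intro a b hadj heq
      have : (a, b) ∈ badE G ψ' := ⟨hadj, heq⟩
      rw [hE'] at this
      exact this
    · intro x hxne
      by_contra hno
      push_neg at hno
      have : x ∈ badV G ψ' := by
        refine ⟨hxne, ?_⟩
        intro c
        rw [← cntF_bridge]
        exact fun ho => (hno c) ho
      rw [hV'] at this
      exact this
  have hle : oddChrom G ≤ k - 1 := oddChrom_le_of_coloring G hcol
  have hge := hG.1
  omega

end OddColoringProof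
end

section
/- For every n, the graph K_n* obtained from K_n by subdividing each edge once has thickness at most 2. -/
open SimpleGraph

/-- `Knstar n` is the graph obtained from the complete graph `K_n` by subdividing each edge
exactly once: each edge `e` of `K_n` becomes a new vertex adjacent to both endpoints of `e`. -/
def Knstar (n : ℕ) : SimpleGraph (Fin n ⊕ {e : Sym2 (Fin n) // ¬ e.IsDiag}) :=
  SimpleGraph.fromRel (fun a b =>
    ∃ (u : Fin n) (e : {e : Sym2 (Fin n) // ¬ e.IsDiag}),
      a = Sum.inl u ∧ b = Sum.inr e ∧ u ∈ e.val)

lemma connected_step {V : Type} {G : SimpleGraph V} {B : Set V}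
    (hB : (G.induce B).Connected) {y z : V} (hy : y ∈ B) (hz : z ∈ B) (hne : y ≠ z) :
    ∃ w ∈ B, G.Adj y w := by
  obtain ⟨p⟩ := hB.preconnected ⟨y, hy⟩ ⟨z, hz⟩
  cases p with
  | nil => exact absurd rfl hne
  | @cons _ b _ h q => exact ⟨b.1, b.2, h⟩

section Star
variable {V : Type} {G : SimpleGraph V} {L : V → Prop}
variable (Hadj : ∀ ⦃x y⦄, G.Adj x y → (L x ↔ ¬ L y))
variable (Huniq : ∀ ⦃x y y'⦄, L x → G.Adj x y → G.Adj x y' → y = y')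

include Huniq in
lemma leaf_singleton {X Y : Set V} (hY : (G.induce Y).Connected) (hd : Disjoint X Y)
    {x y : V} (hx : x ∈ X) (hy : y ∈ Y) (hadj : G.Adj x y) (hLy : L y) : Y = {y} := by
  ext z
  simp only [Set.mem_singleton_iff]
  constructor
  · intro hz
    by_contra hne
    obtain ⟨w, hwY, hyw⟩ := connected_step hY hy hz (Ne.symm hne)
    have : w = x := Huniq hLy hyw hadj.symm
    exact Set.disjoint_left.mp hd hx (this ▸ hwY)
  · rintro rfl; exact hy

include Hadj Huniq in
lemma adj_case {X Y : Set V} (hX : (G.induce X).Connected) (hY : (G.induce Y).Connected)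
    (hd : Disjoint X Y) {x y : V} (hx : x ∈ X) (hy : y ∈ Y) (hadj : G.Adj x y) :
    (L y ∧ Y = {y} ∧ G.Adj y x) ∨ (L x ∧ X = {x} ∧ G.Adj x y) := by
  by_cases hLy : L y
  · exact Or.inl ⟨hLy, leaf_singleton Huniq hY hd hx hy hadj hLy, hadj.symm⟩
  · have hLx : L x := (Hadj hadj).mpr hLy
    exact Or.inr ⟨hLx, leaf_singleton Huniq hX hd.symm hy hx hadj.symm hLx, hadj⟩

include Hadj Huniq in
lemma no_triangle {B0 B1 B2 : Set V}
    (h0 : (G.induce B0).Connected) (h1 : (G.induce B1).Connected)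
    (d01 : Disjoint B0 B1) (d02 : Disjoint B0 B2) (d12 : Disjoint B1 B2)
    (e01 : ∃ x ∈ B0, ∃ y ∈ B1, G.Adj x y)
    (e02 : ∃ x ∈ B0, ∃ y ∈ B2, G.Adj x y)
    (e12 : ∃ x ∈ B1, ∃ y ∈ B2, G.Adj x y) : False := by
  obtain ⟨x, hx, y, hy, hadj⟩ := e01
  rcases adj_case Hadj Huniq h0 h1 d01 hx hy hadj with ⟨hLy, hYs, hyx⟩ | ⟨hLx, hXs, _⟩
  · obtain ⟨a, ha, b, hb, hab⟩ := e12
    have : a = y := by rw [hYs] at ha; exact ha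
    subst this
    have : b = x := Huniq hLy hab hyx
    exact Set.disjoint_left.mp d02 hx (this ▸ hb)
  · obtain ⟨a, ha, b, hb, hab⟩ := e02
    have : a = x := by rw [hXs] at ha; exact ha
    subst this
    have : b = y := Huniq hLx hab hadj
    exact Set.disjoint_left.mp d12 hy (this ▸ hb)

include Hadj Huniq in
lemma no_path3 {A0 A1 B0 B1 : Set V}
    (hA0 : (G.induce A0).Connected) (hB0 : (G.induce B0).Connected)
    (dA0B0 : Disjoint A0 B0) (dA0A1 : Disjoint A0 A1) (dB0B1 : Disjoint B0 B1)
    (e00 : ∃ x ∈ A0, ∃ y ∈ B0, G.Adj x y)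
    (e01 : ∃ x ∈ A0, ∃ y ∈ B1, G.Adj x y)
    (e10 : ∃ x ∈ A1, ∃ y ∈ B0, G.Adj x y) : False := by
  obtain ⟨x, hx, y, hy, hadj⟩ := e00
  rcases adj_case Hadj Huniq hA0 hB0 dA0B0 hx hy hadj with ⟨hLy, hYs, hyx⟩ | ⟨hLx, hXs, _⟩
  · obtain ⟨a, ha, b, hb, hab⟩ := e10
    have : b = y := by rw [hYs] at hb; exact hb
    subst this
    have : a = x := Huniq hLy hab.symm hyx
    exact Set.disjoint_left.mp dA0A1 hx (this ▸ ha)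
  · obtain ⟨a, ha, b, hb, hab⟩ := e01
    have : a = x := by rw [hXs] at ha; exact ha
    subst this
    have : b = y := Huniq hLx hab hadj
    exact Set.disjoint_left.mp dB0B1 hy (this ▸ hb)

include Hadj Huniq in
lemma starlike_planar : IsPlanar G := by
  constructor
  · rintro ⟨B, -, hc, hp, he⟩
    exact no_triangle Hadj Huniq (hc 0) (hc 1)
      (hp (show (0:Fin 5) ≠ 1 by decide)) (hp (show (0:Fin 5) ≠ 2 by decide))
      (hp (show (1:Fin 5) ≠ 2 by decide))
      (he 0 1 (by simp)) (he 0 2 (by simp)) (he 1 2 (by simp))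
  · rintro ⟨B, -, hc, hp, he⟩
    exact no_path3 Hadj Huniq (hc (Sum.inl 0)) (hc (Sum.inr 0))
      (hp (show (Sum.inl 0 : Fin 3 ⊕ Fin 3) ≠ Sum.inr 0 by simp))
      (hp (show (Sum.inl 0 : Fin 3 ⊕ Fin 3) ≠ Sum.inl 1 by simp))
      (hp (show (Sum.inr 0 : Fin 3 ⊕ Fin 3) ≠ Sum.inr 1 by simp))
      (he (Sum.inl 0) (Sum.inr 0) (by simp))
      (he (Sum.inl 0) (Sum.inr 1) (by simp))
      (he (Sum.inl 1) (Sum.inr 0) (by simp))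
end Star


/-- the smaller endpoint of a `Sym2`. -/
def mn {n : ℕ} (e : Sym2 (Fin n)) : Fin n := Sym2.lift ⟨min, min_comm⟩ e

@[simp] lemma mn_mk {n : ℕ} (a b : Fin n) : mn s(a, b) = min a b := rfl

lemma mn_mem {n : ℕ} (e : Sym2 (Fin n)) : mn e ∈ e := by
  induction e using Sym2.ind with
  | _ a b =>
    rw [mn_mk, Sym2.mem_iff]
    exact min_choice a b

lemma other_unique {n : ℕ} {e : Sym2 (Fin n)} {u u' : Fin n}
    (hu : u ∈ e) (hu' : u' ∈ e) (h1 : u ≠ mn e) (h2 : u' ≠ mn e) : u = u' := by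
  induction e using Sym2.ind with
  | _ a b =>
    rw [Sym2.mem_iff] at hu hu'
    rw [mn_mk] at h1 h2
    rcases min_choice a b with h | h <;> rcases hu with rfl | rfl <;>
      rcases hu' with rfl | rfl <;> simp_all

def col (n : ℕ) : Sym2 (Fin n ⊕ {e : Sym2 (Fin n) // ¬ e.IsDiag}) → Fin 2 :=
  Sym2.lift ⟨fun a b =>
    match a, b with
    | Sum.inl u, Sum.inr e => if u = mn e.val then 0 else 1
    | Sum.inr e, Sum.inl u => if u = mn e.val then 0 else 1
    | _, _ => 0,
   by intro a b; cases a <;> cases b <;> rfl⟩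

@[simp] lemma col_mk {n : ℕ} (u : Fin n) (e : {e : Sym2 (Fin n) // ¬ e.IsDiag}) :
    col n s(Sum.inl u, Sum.inr e) = if u = mn e.val then 0 else 1 := rfl

lemma knstar_adj {n : ℕ} {a b : Fin n ⊕ {e : Sym2 (Fin n) // ¬ e.IsDiag}} :
    (Knstar n).Adj a b ↔ ∃ (u : Fin n) (e : {e : Sym2 (Fin n) // ¬ e.IsDiag}),
      u ∈ e.val ∧ ((a = Sum.inl u ∧ b = Sum.inr e) ∨ (a = Sum.inr e ∧ b = Sum.inl u)) := by
  rw [Knstar, fromRel_adj]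
  constructor
  · rintro ⟨hne, ⟨u, e, rfl, rfl, hm⟩ | ⟨u, e, rfl, rfl, hm⟩⟩
    · exact ⟨u, e, hm, Or.inl ⟨rfl, rfl⟩⟩
    · exact ⟨u, e, hm, Or.inr ⟨rfl, rfl⟩⟩
  · rintro ⟨u, e, hm, ⟨rfl, rfl⟩ | ⟨rfl, rfl⟩⟩
    · exact ⟨by simp, Or.inl ⟨u, e, rfl, rfl, hm⟩⟩
    · exact ⟨by simp, Or.inr ⟨u, e, rfl, rfl, hm⟩⟩

-- adjacency of the color classes
lemma colored_adj {n : ℕ} (i : Fin 2) {a b : Fin n ⊕ {e : Sym2 (Fin n) // ¬ e.IsDiag}} :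
    (SimpleGraph.fromEdgeSet
      {e | e ∈ (Knstar n).edgeSet ∧ col n e = i}).Adj a b ↔
      (Knstar n).Adj a b ∧ col n s(a, b) = i := by
  rw [fromEdgeSet_adj]
  simp only [Set.mem_setOf_eq, mem_edgeSet]
  constructor
  · rintro ⟨⟨h1, h2⟩, -⟩; exact ⟨h1, h2⟩
  · rintro ⟨h1, h2⟩; exact ⟨⟨h1, h2⟩, h1.ne⟩

@[simp] lemma col_mk' {n : ℕ} (u : Fin n) (e : {e : Sym2 (Fin n) // ¬ e.IsDiag}) :
    col n s(Sum.inr e, Sum.inl u) = if u = mn e.val then 0 else 1 := rfl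

lemma colored_Huniq {n : ℕ} (i : Fin 2)
    {x y y' : Fin n ⊕ {e : Sym2 (Fin n) // ¬ e.IsDiag}}
    (hL : x.isRight = true)
    (h1 : (SimpleGraph.fromEdgeSet
      {e | e ∈ (Knstar n).edgeSet ∧ col n e = i}).Adj x y)
    (h2 : (SimpleGraph.fromEdgeSet
      {e | e ∈ (Knstar n).edgeSet ∧ col n e = i}).Adj x y') : y = y' := by
  rw [colored_adj, knstar_adj] at h1 h2
  obtain ⟨⟨u, e, hm, hpat⟩, hcol⟩ := h1
  obtain ⟨⟨u', e', hm', hpat'⟩, hcol'⟩ := h2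
  rcases hpat with ⟨rfl, rfl⟩ | ⟨rfl, rfl⟩
  · simp at hL
  rcases hpat' with ⟨heq, rfl⟩ | ⟨heq, rfl⟩
  · simp at heq
  have he : e' = e := by
    have := Sum.inr.inj heq; exact this.symm
  subst he
  rw [col_mk'] at hcol hcol'
  by_cases h1 : u = mn e'.val <;> by_cases h2 : u' = mn e'.val
  · rw [h1, h2]
  · rw [if_pos h1] at hcol; rw [if_neg h2] at hcol'
    exact absurd (hcol.trans hcol'.symm) (by decide)
  · rw [if_neg h1] at hcol; rw [if_pos h2] at hcol'
    exact absurd (hcol.trans hcol'.symm) (by decide)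
  · rw [other_unique hm hm' h1 h2]

lemma colored_Hadj {n : ℕ} (i : Fin 2)
    {x y : Fin n ⊕ {e : Sym2 (Fin n) // ¬ e.IsDiag}}
    (h : (SimpleGraph.fromEdgeSet
      {e | e ∈ (Knstar n).edgeSet ∧ col n e = i}).Adj x y) :
    (x.isRight = true) ↔ ¬ (y.isRight = true) := by
  rw [colored_adj, knstar_adj] at h
  obtain ⟨⟨u, e, hm, hpat⟩, -⟩ := h
  rcases hpat with ⟨rfl, rfl⟩ | ⟨rfl, rfl⟩ <;> simp


/-- The 1-subdivision of `K_n` has thickness at most 2. -/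
theorem Knstar_thickness_le_two (n : ℕ) : thickness (Knstar n) ≤ 2 := by
  apply Nat.sInf_le
  refine ⟨col n, fun i => ?_⟩
  exact starlike_planar (L := fun v => v.isRight = true)
    (fun x y h => colored_Hadj i h) (fun x y y' hL h1 h2 => colored_Huniq i hL h1 h2)
end

section
/- If G is an odd k⁺-critical graph with k ≥ 4, then G has no vertex of degree 1. -/
open SimpleGraph

lemma exists_odd_coloring {V : Type} [Finite V] (G : SimpleGraph V) :
    {k | ∃ φ : V → Fin k, IsOddColoring G φ}.Nonempty := by
  refine ⟨Nat.card V, Finite.equivFin V, fun a b hab h => hab.ne ((Finite.equivFin V).injective h), ?_⟩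
  rintro w ⟨x, hx⟩
  refine ⟨Finite.equivFin V x, ?_⟩
  have hset : {y | y ∈ G.neighborSet w ∧ Finite.equivFin V y = Finite.equivFin V x} = {x} := by
    ext y
    simp only [Set.mem_setOf_eq, Set.mem_singleton_iff, Equiv.apply_eq_iff_eq]
    exact ⟨fun h => h.2, fun h => ⟨h ▸ hx, h⟩⟩
  rw [hset, Set.ncard_singleton]
  exact odd_one

lemma exists_third {n : ℕ} (hn : 3 ≤ n) (a b : Fin n) : ∃ c : Fin n, c ≠ a ∧ c ≠ b := by
  by_contra h
  push_neg at h
  have hsub : (Finset.univ : Finset (Fin n)) ⊆ {a, b} := by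
    intro x _
    simp only [Finset.mem_insert, Finset.mem_singleton]
    by_cases hx : x = a
    · exact Or.inl hx
    · exact Or.inr (h x hx)
  have h1 : n ≤ ({a, b} : Finset (Fin n)).card := by
    simpa using Finset.card_le_card hsub
  have h2 : ({a, b} : Finset (Fin n)).card ≤ 2 :=
    (Finset.card_insert_le _ _).trans (by simp)
  omega

/-- An odd `k⁺`-critical graph with `k ≥ 4` has no vertex of degree 1. -/
theorem oddCritical_no_degree_one {V : Type} [Fintype V] (G : SimpleGraph V)
    (k : ℕ) (hk : 4 ≤ k) (hG : OddCritical G k) :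
    ∀ v : V, deg G v ≠ 1 := by
  classical
  intro v hv
  obtain ⟨u, hu⟩ := Set.ncard_eq_one.mp hv
  have hadj : G.Adj v u := by
    have h : u ∈ G.neighborSet v := hu ▸ rfl
    exact h
  have hvu : v ≠ u := hadj.ne
  set G' := G.deleteEdges {s(v, u)} with hG'
  have hle' : G' ≤ G := SimpleGraph.deleteEdges_le _
  set H : G.Subgraph := SimpleGraph.toSubgraph G' hle' with hH
  have hcoeAdj : ∀ (x y : ↥H.verts), H.coe.Adj x y ↔ G'.Adj x.val y.val := by
    intro x y
    rw [Subgraph.coe_adj]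
    exact Iff.rfl
  have hHne : H ≠ ⊤ := by
    intro h
    have h1 : H.Adj v u := by rw [h]; simpa using hadj
    have h2 : G'.Adj v u := h1
    rw [hG', SimpleGraph.deleteEdges_adj] at h2
    exact h2.2 rfl
  obtain ⟨hchrom, hcrit⟩ := hG
  set k' := oddChrom H.coe with hk'
  have hlt : k' < k := hcrit H hHne
  have hne : {t | ∃ φ : ↥H.verts → Fin t, IsOddColoring H.coe φ}.Nonempty :=
    exists_odd_coloring _
  obtain ⟨φ, hφp, hφo⟩ : ∃ φ : ↥H.verts → Fin k', IsOddColoring H.coe φ :=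
    Nat.sInf_mem hne
  have hmem : ∀ x : V, x ∈ H.verts := fun x => Set.mem_univ x
  set φ' : V → Fin k' := fun x => φ ⟨x, hmem x⟩ with hφ'
  have hproper' : ∀ a b : V, G'.Adj a b → φ' a ≠ φ' b := by
    intro a b hab
    exact hφp ((hcoeAdj ⟨a, hmem a⟩ ⟨b, hmem b⟩).mpr hab)
  have hodd' : ∀ w : V, (G'.neighborSet w).Nonempty →
      ∃ c : Fin k', Odd ({x | x ∈ G'.neighborSet w ∧ φ' x = c}.ncard) := by
    intro w ⟨x, hx⟩
    have hx' : (⟨x, hmem x⟩ : ↥H.verts) ∈ H.coe.neighborSet ⟨w, hmem w⟩ :=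
      (hcoeAdj ⟨w, hmem w⟩ ⟨x, hmem x⟩).mpr hx
    obtain ⟨c, hc⟩ := hφo ⟨w, hmem w⟩ ⟨_, hx'⟩
    refine ⟨c, ?_⟩
    have himg : {x | x ∈ G'.neighborSet w ∧ φ' x = c} =
        Subtype.val '' {y | y ∈ H.coe.neighborSet ⟨w, hmem w⟩ ∧ φ y = c} := by
      ext z
      simp only [Set.mem_image, Set.mem_setOf_eq, mem_neighborSet]
      constructor
      · rintro ⟨h1, h2⟩
        exact ⟨⟨z, hmem z⟩, ⟨(hcoeAdj _ _).mpr h1, h2⟩, rfl⟩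
      · rintro ⟨⟨y, hy⟩, ⟨h1, h2⟩, rfl⟩
        exact ⟨(hcoeAdj _ _).mp h1, h2⟩
    rw [himg, Set.ncard_image_of_injective _ Subtype.val_injective]
    exact hc
  have hk'le : k' ≤ k - 1 := by omega
  set cst : Fin k' → Fin (k - 1) := Fin.castLE hk'le with hcst
  have hcstinj : Function.Injective cst := Fin.castLE_injective hk'le
  -- neighbor set facts
  have hN'u : G'.neighborSet u = G.neighborSet u \ {v} := by
    ext x
    simp only [mem_neighborSet, hG', SimpleGraph.deleteEdges_adj, Set.mem_diff,
      Set.mem_singleton_iff, Set.mem_setOf_eq, Sym2.eq_iff]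
    constructor
    · rintro ⟨h1, h2⟩
      refine ⟨h1, fun hxv => h2 ?_⟩
      subst hxv; tauto
    · rintro ⟨h1, h2⟩
      refine ⟨h1, fun h => ?_⟩
      rcases h with ⟨h3, h4⟩ | ⟨h3, h4⟩
      · exact hvu h3.symm
      · exact h2 h4
  have hN'w : ∀ w : V, w ≠ v → w ≠ u → G'.neighborSet w = G.neighborSet w := by
    intro w hwv hwu
    ext x
    simp only [mem_neighborSet, hG', SimpleGraph.deleteEdges_adj, Set.mem_singleton_iff,
      Sym2.eq_iff]
    constructor
    · exact fun h => h.1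
    · intro h
      refine ⟨h, fun hc => ?_⟩
      rcases hc with ⟨h3, h4⟩ | ⟨h3, h4⟩
      · exact hwv h3
      · exact hwu h3
  have hvnotin : ∀ w : V, w ≠ u → v ∉ G.neighborSet w := by
    intro w hw hmemv
    apply hw
    have h2 : w ∈ G.neighborSet v := G.adj_symm hmemv
    rw [hu] at h2
    exact h2
  -- choose color for u's odd class
  obtain ⟨c₀, hc₀⟩ : ∃ c₀ : Fin (k - 1), (G'.neighborSet u).Nonempty →
      Odd ({x | x ∈ G'.neighborSet u ∧ cst (φ' x) = c₀}.ncard) := by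
    by_cases h : (G'.neighborSet u).Nonempty
    · obtain ⟨c, hc⟩ := hodd' u h
      refine ⟨cst c, fun _ => ?_⟩
      have hEq : {x | x ∈ G'.neighborSet u ∧ cst (φ' x) = cst c} =
          {x | x ∈ G'.neighborSet u ∧ φ' x = c} := by
        ext x; simp [hcstinj.eq_iff]
      rw [hEq]; exact hc
    · exact ⟨cst (φ' v), fun h' => absurd h' h⟩
  obtain ⟨col, hcol1, hcol2⟩ := exists_third (show 3 ≤ k - 1 by omega) (cst (φ' u)) c₀
  set ψ : V → Fin (k - 1) := fun x => if x = v then col else cst (φ' x) with hψdef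
  have hψv : ψ v = col := by rw [hψdef]; simp
  have hψ : ∀ x : V, x ≠ v → ψ x = cst (φ' x) := by
    intro x h
    rw [hψdef]
    simp [h]
  -- ψ is a proper coloring of G
  have hGadj' : ∀ a b : V, G.Adj a b → a ≠ v → b ≠ v → G'.Adj a b := by
    intro a b hab ha hb
    rw [hG', SimpleGraph.deleteEdges_adj]
    refine ⟨hab, fun h => ?_⟩
    rw [Set.mem_singleton_iff, Sym2.eq_iff] at h
    rcases h with ⟨h1, h2⟩ | ⟨h1, h2⟩
    · exact ha h1
    · exact hb h2
  have hproper : ∀ ⦃a b : V⦄, G.Adj a b → ψ a ≠ ψ b := by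
    intro a b hab heq
    by_cases ha : a = v
    · have hb : b = u := by
        have h2 : b ∈ G.neighborSet v := ha ▸ hab
        rw [hu] at h2; exact h2
      rw [ha, hψv, hb, hψ u (Ne.symm hvu)] at heq
      exact hcol1 heq
    · by_cases hb : b = v
      · have ha2 : a = u := by
          have h2 : a ∈ G.neighborSet v := hb ▸ hab.symm
          rw [hu] at h2; exact h2
        rw [hb, hψv, ha2, hψ u (Ne.symm hvu)] at heq
        exact hcol1 heq.symm
      · rw [hψ a ha, hψ b hb] at heq
        exact hproper' a b (hGadj' a b hab ha hb) (hcstinj heq)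
  -- ψ is odd
  have hodd : ∀ w : V, (G.neighborSet w).Nonempty →
      ∃ c : Fin (k - 1), Odd ({x | x ∈ G.neighborSet w ∧ ψ x = c}.ncard) := by
    intro w hwne
    by_cases hwv : w = v
    · refine ⟨cst (φ' u), ?_⟩
      have hEq : {x | x ∈ G.neighborSet w ∧ ψ x = cst (φ' u)} = {u} := by
        ext x
        rw [hwv, hu]
        simp only [Set.mem_setOf_eq, Set.mem_singleton_iff]
        constructor
        · rintro ⟨h1, _⟩; exact h1
        · intro hxu
          exact ⟨hxu, by rw [hxu]; exact hψ u (Ne.symm hvu)⟩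
      rw [hEq, Set.ncard_singleton]; exact odd_one
    · by_cases hwu : w = u
      · by_cases hN : (G'.neighborSet u).Nonempty
        · refine ⟨c₀, ?_⟩
          have hEq : {x | x ∈ G.neighborSet w ∧ ψ x = c₀} =
              {x | x ∈ G'.neighborSet u ∧ cst (φ' x) = c₀} := by
            ext x
            simp only [Set.mem_setOf_eq, hN'u, Set.mem_diff, Set.mem_singleton_iff, hwu]
            constructor
            · rintro ⟨h1, h2⟩
              have hxv : x ≠ v := by
                rintro rfl
                rw [hψv] at h2
                exact hcol2 h2
              rw [hψ x hxv] at h2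
              exact ⟨⟨h1, hxv⟩, h2⟩
            · rintro ⟨⟨h1, h2⟩, h3⟩
              rw [hψ x h2]
              exact ⟨h1, h3⟩
          rw [hEq]; exact hc₀ hN
        · refine ⟨col, ?_⟩
          have hNw : G.neighborSet u = {v} := by
            rw [Set.not_nonempty_iff_eq_empty, hN'u, Set.diff_eq_empty] at hN
            apply Set.Subset.antisymm hN
            intro x hx
            rw [Set.mem_singleton_iff] at hx
            rw [hx]
            exact hadj.symm
          have hEq : {x | x ∈ G.neighborSet w ∧ ψ x = col} = {v} := by
            ext x
            rw [hwu, hNw]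
            simp only [Set.mem_setOf_eq, Set.mem_singleton_iff]
            constructor
            · rintro ⟨h1, _⟩; exact h1
            · intro hxv
              exact ⟨hxv, by rw [hxv]; exact hψv⟩
          rw [hEq, Set.ncard_singleton]; exact odd_one
      · have hNw : G'.neighborSet w = G.neighborSet w := hN'w w hwv hwu
        obtain ⟨c, hc⟩ := hodd' w (by rw [hNw]; exact hwne)
        refine ⟨cst c, ?_⟩
        have hEq : {x | x ∈ G.neighborSet w ∧ ψ x = cst c} =
            {x | x ∈ G'.neighborSet w ∧ φ' x = c} := by
          ext x
          rw [hNw]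
          simp only [Set.mem_setOf_eq]
          constructor
          · rintro ⟨h1, h2⟩
            have hxv : x ≠ v := by
              rintro rfl
              exact hvnotin w hwu h1
            rw [hψ x hxv] at h2
            exact ⟨h1, hcstinj h2⟩
          · rintro ⟨h1, h2⟩
            have hxv : x ≠ v := by
              rintro rfl
              exact hvnotin w hwu h1
            rw [hψ x hxv, h2]
            exact ⟨h1, rfl⟩
        rw [hEq]; exact hc
  have hmem2 : k - 1 ∈ {t | ∃ φ : V → Fin t, IsOddColoring G φ} := ⟨ψ, hproper, hodd⟩
  have hle2 : oddChrom G ≤ k - 1 := Nat.sInf_le hmem2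
  omega
end

section
/- Every tree T with at least one edge satisfies χ_o(T) ≤ 3. -/
open SimpleGraph

/-!
Root the tree at a vertex `r` of degree at most one and colour each vertex by its distance from
`r` modulo 3. Adjacent vertices are at distances differing by one, so the colouring is proper.
A vertex `v ≠ r` at distance `d` has exactly one neighbour at distance `d - 1`, its parent, and
all its other neighbours are at distance `d + 1`; as `d - 1 ≢ d + 1 (mod 3)`, the parent's colour
occurs exactly once around `v`. The root has at most one neighbour.
-/

lemma isOddColoring_of_exists_uniquely_colored_neighbor {V : Type} {G : SimpleGraph V} {k : ℕ}
    {φ : V → Fin k}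
    (hproper : ∀ ⦃u v⦄, G.Adj u v → φ u ≠ φ v)
    (hunique : ∀ v, (G.neighborSet v).Nonempty →
      ∃ u, G.Adj v u ∧ ∀ w, G.Adj v w → φ w = φ u → w = u) :
    IsOddColoring G φ := by
  refine ⟨hproper, fun v hv => ?_⟩
  obtain ⟨u, hadj, huniq⟩ := hunique v hv
  refine ⟨φ u, ?_⟩
  have hclass : {w | w ∈ G.neighborSet v ∧ φ w = φ u} = {u} := by
    ext w
    exact ⟨fun hw => huniq w hw.1 hw.2, by rintro rfl; exact ⟨hadj, rfl⟩⟩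
  rw [hclass, Set.ncard_singleton]
  exact odd_one

namespace SimpleGraph

variable {V : Type} {G : SimpleGraph V}

lemma IsTree.exists_subsingleton_neighborSet [Finite V] (hG : G.IsTree) :
    ∃ r, (G.neighborSet r).Subsingleton := by
  classical
  have : Fintype V := Fintype.ofFinite V
  cases subsingleton_or_nontrivial V with
  | inl _ => exact ⟨hG.connected.nonempty.some, Set.subsingleton_of_subsingleton⟩
  | inr _ =>
    obtain ⟨r, hr⟩ := hG.exists_vert_degree_one_of_nontrivial
    obtain ⟨_, _, huniq⟩ := degree_eq_one_iff_existsUnique_adj.mp hr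
    exact ⟨r, fun w hw w' hw' => (huniq w hw).trans (huniq w' hw').symm⟩

lemma IsTree.existsUnique_adj_dist_add_one (hG : G.IsTree) {r v : V} (hv : v ≠ r) :
    ∃! w, G.Adj v w ∧ G.dist r w + 1 = G.dist r v := by
  classical
  obtain ⟨p, hp, hplen⟩ := (hG.connected r v).exists_path_of_dist
  have hnil : ¬p.Nil := fun h => hv h.eq.symm
  refine ⟨p.penultimate, ⟨(p.adj_penultimate hnil).symm, ?_⟩, ?_⟩
  · have hle := G.dist_le p.dropLast
    rw [Walk.length_dropLast] at hle
    have hpos := (hG.connected r v).pos_dist_of_ne hv.symm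
    rcases hG.dist_eq_dist_add_one_of_adj r (p.adj_penultimate hnil) with h | h <;> omega
  · rintro w ⟨hadj, hdist⟩
    obtain ⟨q, hq, hqlen⟩ := (hG.connected r w).exists_path_of_dist
    have hvq : v ∉ q.support := fun hvq => by
      have := (G.dist_le (q.takeUntil v hvq)).trans (q.length_takeUntil_le_length hvq)
      omega
    exact hG.isAcyclic.eq_penultimate_of_adj_end hp hadj
      (hG.isAcyclic.mem_support_of_ne_mem_support_of_adj_of_isPath hp hq hadj hvq)

lemma IsTree.isOddColoring_dist_mod_three (hG : G.IsTree) {r : V}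
    (hr : (G.neighborSet r).Subsingleton) :
    IsOddColoring G (fun v => Fin.ofNat 3 (G.dist r v)) := by
  have hcolor : ∀ a b : ℕ, Fin.ofNat 3 a = Fin.ofNat 3 b ↔ a % 3 = b % 3 := by
    simp [Fin.ext_iff]
  refine isOddColoring_of_exists_uniquely_colored_neighbor (fun u v hadj => ?_) fun v hv => ?_
  · rw [Ne, hcolor]
    rcases hG.dist_eq_dist_add_one_of_adj r hadj with h | h <;> omega
  · by_cases hvr : v = r
    · subst hvr
      obtain ⟨u, hu⟩ := hv
      exact ⟨u, hu, fun w hw _ => hr hw hu⟩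
    · obtain ⟨u, ⟨hadj, hdist⟩, huniq⟩ := hG.existsUnique_adj_dist_add_one hvr
      refine ⟨u, hadj, fun w hw hcol => huniq w ⟨hw, ?_⟩⟩
      rw [hcolor] at hcol
      rcases hG.dist_eq_dist_add_one_of_adj r hw with h | h <;> omega

end SimpleGraph

theorem oddChrom_tree_le_three_general {V : Type} [Fintype V] (G : SimpleGraph V)
    (hT : G.IsTree) :
    oddChrom G ≤ 3 := by
  obtain ⟨r, hr⟩ := hT.exists_subsingleton_neighborSet
  exact Nat.sInf_le ⟨_, hT.isOddColoring_dist_mod_three hr⟩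

/-- Every tree with at least one edge has odd chromatic number at most 3. -/
theorem oddChrom_tree_le_three {V : Type} [Fintype V] (G : SimpleGraph V)
    (hT : G.IsTree) (hE : G.edgeSet.Nonempty) :
    oddChrom G ≤ 3 :=
  oddChrom_tree_le_three_general G hT
end
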